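/- If every bipartite graph admitting a bipartition (A,B) with |A| ≥ |B| > 0 and every vertex of A of degree at least six has a K_6 minor, then every bipartite graph admitting a bipartition (A,B) with |A| ≥ |B| > 0 and every vertex of A of degree at least five has a K_5 minor. -/

import Mathlib

/-!
Glue two copies of `G` at a vertex `b ∈ B` and add an apex adjacent to both copies of `A`, the
apex joining `B`. Both parts exactly double (`b` is shared, the apex is new), so `|A| ≥ |B| > 0`
survives, and every vertex of `A` gains the apex as a sixth neighbour. A `K_6` minor of the new
graph has five branch sets avoiding the apex. Since `b` is a cut vertex between the two copies,
the branch sets avoiding `b` all lie in one copy (two on opposite sides could not touch), and the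
one through `b` can be cut back to that copy without losing connectivity; this is a `K_5` minor
of `G`.
-/

open SimpleGraph Function

/-- `G` has a `K_t` minor: there are `t` nonempty, pairwise disjoint "branch sets",
each inducing a connected subgraph, with an edge of `G` between any two of them.
(This is the "`t`-cluster" formulation, equivalent to `K_t` being obtainable from a
subgraph of `G` by contracting edges.) -/
def HasCliqueMinor {V : Type*} (G : SimpleGraph V) (t : ℕ) : Prop :=
  ∃ f : Fin t → Set V,
    (∀ i, (f i).Nonempty) ∧
    (∀ i, (G.induce (f i)).Connected) ∧
    (Pairwise fun i j => Disjoint (f i) (f j)) ∧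
    ∀ i j, i ≠ j → ∃ u ∈ f i, ∃ v ∈ f j, G.Adj u v

/-- `(A, B)` is a bipartition of `G`: the parts partition the vertex set and
every edge joins `A` to `B`. -/
def IsBipartitionWith {V : Type*} (G : SimpleGraph V) (A B : Set V) : Prop :=
  (∀ v, v ∈ A ∨ v ∈ B) ∧ (∀ v, ¬(v ∈ A ∧ v ∈ B)) ∧
    ∀ ⦃u v⦄, G.Adj u v → (u ∈ A ↔ v ∈ B)

/-- A candidate: a graph with a bipartition `(A,B)`, `|A| ≥ |B| > 0`, every vertex
of `A` of degree at least six, and no `K_6` minor. -/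
def IsCandidate {V : Type*} (G : SimpleGraph V) (A B : Set V) : Prop :=
  IsBipartitionWith G A B ∧ B.ncard ≤ A.ncard ∧ B.Nonempty ∧
    (∀ a ∈ A, 6 ≤ (G.neighborSet a).ncard) ∧ ¬ HasCliqueMinor G 6

/-- A minimal candidate: a candidate minimizing `|V(G)| + |E(G)|` among all
(finite) candidates. -/
def IsMinimalCandidate {V : Type*} [Fintype V] (G : SimpleGraph V) (A B : Set V) : Prop :=
  IsCandidate G A B ∧
    ∀ (n : ℕ) (G' : SimpleGraph (Fin n)) (A' B' : Set (Fin n)),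
      IsCandidate G' A' B' →
        Fintype.card V + G.edgeSet.ncard ≤ n + G'.edgeSet.ncard

variable {V W : Type*}

namespace SimpleGraph

variable {G : SimpleGraph V} {H : SimpleGraph W}

theorem Reachable.lift (f : V → W) (hf : ∀ u v, G.Adj u v → H.Reachable (f u) (f v))
    {u v : V} (h : G.Reachable u v) : H.Reachable (f u) (f v) := by
  simp only [reachable_iff_reflTransGen] at hf h ⊢
  exact Relation.ReflTransGen.lift' f hf u v h

theorem Connected.of_adj_reachable (hG : G.Connected) (f : V → W) (hsurj : Surjective f)
    (hf : ∀ u v, G.Adj u v → H.Reachable (f u) (f v)) : H.Connected := by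
  refine (connected_iff H).2 ⟨fun x y => ?_, hG.nonempty.map f⟩
  obtain ⟨u, rfl⟩ := hsurj x
  obtain ⟨v, rfl⟩ := hsurj y
  exact (hG.preconnected u v).lift f hf

theorem Embedding.ncard_neighborSet_add_one_le [Finite W] (e : G ↪g H) {a : V} {z : W}
    (hz : z ∉ Set.range e) (hadj : H.Adj (e a) z) :
    (G.neighborSet a).ncard + 1 ≤ (H.neighborSet (e a)).ncard := by
  have hsub : insert z (e '' G.neighborSet a) ⊆ H.neighborSet (e a) := by
    rintro x (rfl | ⟨v, hv, rfl⟩)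
    · exact hadj
    · exact e.map_adj_iff.2 hv
  calc (G.neighborSet a).ncard + 1 = (insert z (e '' G.neighborSet a)).ncard := by
        rw [Set.ncard_insert_of_notMem (by rintro ⟨v, -, hv⟩; exact hz ⟨v, hv⟩),
          Set.ncard_image_of_injective _ e.injective]
    _ ≤ (H.neighborSet (e a)).ncard := Set.ncard_le_ncard hsub

end SimpleGraph

structure IsCliqueMinorModel {ι : Type*} (G : SimpleGraph V) (f : ι → Set V) : Prop where
  nonempty : ∀ i, (f i).Nonempty
  connected : ∀ i, (G.induce (f i)).Connected
  disjoint : Pairwise fun i j => Disjoint (f i) (f j)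
  adj : ∀ i j, i ≠ j → ∃ u ∈ f i, ∃ v ∈ f j, G.Adj u v

theorem hasCliqueMinor_iff {G : SimpleGraph V} {t : ℕ} :
    HasCliqueMinor G t ↔ ∃ f : Fin t → Set V, IsCliqueMinorModel G f :=
  ⟨fun ⟨f, h₁, h₂, h₃, h₄⟩ => ⟨f, h₁, h₂, h₃, h₄⟩, fun ⟨f, h⟩ => ⟨f, h.1, h.2, h.3, h.4⟩⟩

namespace IsCliqueMinorModel

variable {ι κ : Type*} {G : SimpleGraph V} {H : SimpleGraph W} {f : ι → Set W}

theorem comp (hf : IsCliqueMinorModel H f) {e : κ → ι} (he : Injective e) :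
    IsCliqueMinorModel H (f ∘ e) :=
  ⟨fun _ => hf.nonempty _, fun _ => hf.connected _, fun _ _ hij => hf.disjoint (he.ne hij),
    fun _ _ hij => hf.adj _ _ (he.ne hij)⟩

theorem exists_avoiding {t : ℕ} {f : Fin (t + 1) → Set W} (hf : IsCliqueMinorModel H f)
    (z : W) : ∃ g : Fin t → Set W, IsCliqueMinorModel H g ∧ ∀ i, z ∉ g i := by
  by_cases hz : ∃ i, z ∈ f i
  · obtain ⟨i₀, hi₀⟩ := hz
    exact ⟨_, hf.comp Fin.succAbove_right_injective, fun j hj =>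
      Set.disjoint_left.1 (hf.disjoint (Fin.succAbove_ne i₀ j)) hj hi₀⟩
  · exact ⟨_, hf.comp (Fin.castSucc_injective t), fun j hj => hz ⟨_, hj⟩⟩

theorem comap (hf : IsCliqueMinorModel H f) (e : G ↪g H) (hrange : ∀ i, f i ⊆ Set.range e) :
    IsCliqueMinorModel G fun i => e ⁻¹' f i where
  nonempty i := by
    obtain ⟨x, hx⟩ := hf.nonempty i
    obtain ⟨u, rfl⟩ := hrange i hx
    exact ⟨u, hx⟩
  connected i := by
    choose g hg using fun x : f i => hrange i x.2
    refine (hf.connected i).of_adj_reachable (fun x => ⟨g x, by simp [hg]⟩) ?_ ?_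
    · rintro ⟨u, hu⟩
      exact ⟨⟨e u, hu⟩, Subtype.ext (e.injective (hg _))⟩
    · intro x y hxy
      refine Adj.reachable ?_
      rw [comap_adj, Embedding.coe_subtype, ← e.map_adj_iff, hg, hg]
      exact hxy
  disjoint _ _ hij := (hf.disjoint hij).preimage e
  adj i j hij := by
    obtain ⟨x, hx, y, hy, hxy⟩ := hf.adj i j hij
    obtain ⟨u, rfl⟩ := hrange i hx
    obtain ⟨v, rfl⟩ := hrange j hy
    exact ⟨u, hx, v, hy, e.map_adj_iff.1 hxy⟩

end IsCliqueMinorModel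

def Separates (H : SimpleGraph W) (c : W) (X Y : Set W) : Prop :=
  ∀ x ∈ X, ∀ y ∈ Y, H.Adj x y → x = c ∨ y = c

namespace Separates

variable {ι : Type*} {H : SimpleGraph W} {c : W} {X Y S : Set W}

theorem symm (hsep : Separates H c X Y) : Separates H c Y X :=
  fun y hy x hx hyx => (hsep x hx y hy hyx.symm).symm

theorem subset_or_subset (hsep : Separates H c X Y) (hS : (H.induce S).Connected)
    (hcover : S ⊆ X ∪ Y) (hc : c ∉ S) : S ⊆ X ∨ S ⊆ Y := by
  have hside : ∀ u v : S, H.Adj u v → u.1 ∈ X → v.1 ∈ X := by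
    intro u v huv hu
    by_contra hv
    have hvY := (hcover v.2).resolve_left hv
    rcases hsep u hu v hvY huv with h | h
    · exact hc (h ▸ u.2)
    · exact hc (h ▸ v.2)
  have hconst : ∀ u v : S, (u.1 ∈ X) = (v.1 ∈ X) := fun u v =>
    reachable_bot.1 <| (hS.preconnected u v).lift (H := ⊥) (fun x : S => x.1 ∈ X)
      fun x y hxy => reachable_bot.2 <| propext ⟨hside x y hxy, hside y x hxy.symm⟩
  obtain ⟨x₀⟩ := hS.nonempty
  by_cases hx₀ : x₀.1 ∈ X
  · exact .inl fun v hv => (hconst x₀ ⟨v, hv⟩) ▸ hx₀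
  · exact .inr fun v hv => (hcover hv).resolve_left ((hconst x₀ ⟨v, hv⟩) ▸ hx₀)

theorem connected_induce_inter (hsep : Separates H c X Y) (hS : (H.induce S).Connected)
    (hcover : S ⊆ X ∪ Y) (hcS : c ∈ S) (hcX : c ∈ X) : (H.induce (S ∩ X)).Connected := by
  classical
  -- retract `S` onto `S ∩ X` by sending the vertices outside `X` to the cut vertex
  let r : S → ↥(S ∩ X) := fun x => if hx : x.1 ∈ X then ⟨x, x.2, hx⟩ else ⟨c, hcS, hcX⟩
  have hr_of_mem : ∀ x : S, x.1 ∈ X → (r x).1 = x := fun x hx => by simp [r, hx]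
  have hr_of_notMem : ∀ x : S, x.1 ∉ X → (r x).1 = c := fun x hx => by simp [r, hx]
  refine hS.of_adj_reachable r (fun y => ⟨⟨y, y.2.1⟩, Subtype.ext (hr_of_mem _ y.2.2)⟩) ?_
  intro u v huv
  by_cases hu : u.1 ∈ X <;> by_cases hv : v.1 ∈ X
  · refine Adj.reachable ?_
    simpa [comap_adj, hr_of_mem u hu, hr_of_mem v hv] using huv
  · have huc : u.1 = c := (hsep u hu v ((hcover v.2).resolve_left hv) huv).resolve_right
      fun h => hv (h ▸ hcX)
    rw [Subtype.ext ((hr_of_mem u hu).trans (huc.trans (hr_of_notMem v hv).symm))]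
  · have hvc : v.1 = c := (hsep v hv u ((hcover u.2).resolve_left hu) huv.symm).resolve_right
      fun h => hu (h ▸ hcX)
    rw [Subtype.ext ((hr_of_notMem u hu).trans (hvc.symm.trans (hr_of_mem v hv).symm))]
  · rw [Subtype.ext ((hr_of_notMem u hu).trans (hr_of_notMem v hv).symm)]

theorem isCliqueMinorModel_inter (hsep : Separates H c X Y) {f : ι → Set W}
    (hf : IsCliqueMinorModel H f) (hcover : ∀ i, f i ⊆ X ∪ Y) (hcX : c ∈ X)
    (hX : ∀ i, c ∉ f i → f i ⊆ X) : IsCliqueMinorModel H fun i => f i ∩ X where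
  nonempty i := by
    by_cases hc : c ∈ f i
    · exact ⟨c, hc, hcX⟩
    · exact (Set.inter_eq_left.2 (hX i hc)).symm ▸ hf.nonempty i
  connected i := by
    by_cases hc : c ∈ f i
    · exact hsep.connected_induce_inter (hf.connected i) (hcover i) hc hcX
    · exact (Set.inter_eq_left.2 (hX i hc)).symm ▸ hf.connected i
  disjoint _ _ hij := (hf.disjoint hij).mono Set.inter_subset_left Set.inter_subset_left
  adj i j hij := by
    have hend : ∀ {i j u v}, u ∈ f i → v ∈ f j → H.Adj u v → c ∉ f j → u ∈ X := by
      intro i j u v hu hv huv hcj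
      have hvX := hX j hcj hv
      refine (hcover i hu).elim id fun huY => ?_
      rcases hsep v hvX u huY huv.symm with h | h
      · exact absurd (h ▸ hv) hcj
      · exact h ▸ hcX
    obtain ⟨u, hu, v, hv, huv⟩ := hf.adj i j hij
    by_cases hcj : c ∈ f j
    · have hci : c ∉ f i := fun hci => Set.disjoint_left.1 (hf.disjoint hij) hci hcj
      exact ⟨u, ⟨hu, hX i hci hu⟩, v, ⟨hv, hend hv hu huv.symm hci⟩, huv⟩
    · exact ⟨u, ⟨hu, hend hu hv huv hcj⟩, v, ⟨hv, hX j hcj hv⟩, huv⟩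

theorem isCliqueMinorModel_inter_or (hsep : Separates H c X Y) {f : ι → Set W}
    (hf : IsCliqueMinorModel H f) (hcover : ∀ i, f i ⊆ X ∪ Y) (hcX : c ∈ X) (hcY : c ∈ Y) :
    IsCliqueMinorModel H (fun i => f i ∩ X) ∨ IsCliqueMinorModel H (fun i => f i ∩ Y) := by
  by_cases hX : ∀ i, c ∉ f i → f i ⊆ X
  · exact .inl (hsep.isCliqueMinorModel_inter hf hcover hcX hX)
  simp only [not_forall] at hX
  obtain ⟨i₀, hci₀, hi₀X⟩ := hX
  have hi₀Y : f i₀ ⊆ Y :=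
    (hsep.subset_or_subset (hf.connected i₀) (hcover i₀) hci₀).resolve_left hi₀X
  refine .inr (hsep.symm.isCliqueMinorModel_inter hf
    (fun i => (hcover i).trans (Set.union_comm X Y).subset) hcY fun j hcj => ?_)
  refine (hsep.subset_or_subset (hf.connected j) (hcover j) hcj).resolve_left fun hjX => ?_
  have hj : i₀ ≠ j := fun h => hi₀X (h ▸ hjX)
  obtain ⟨u, hu, v, hv, huv⟩ := hf.adj i₀ j hj
  rcases hsep v (hjX hv) u (hi₀Y hu) huv.symm with h | h
  · exact hcj (h ▸ hv)
  · exact hci₀ (h ▸ hu)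

end Separates

section GluedDouble

variable (G : SimpleGraph V) (A : Set V) (b : V)

/-- Two copies of `G` glued at `b`, plus an apex joined to both copies of `A`. The vertex
`(p, v)` is `v` in copy `p`; the copies share `(false, b)`, and the otherwise unused slot
`(true, b)` is the apex, so that the bipartition is pulled back along `Prod.snd`. Edges of `G`
at `b` also put the apex next to the neighbours of `b`, which is harmless as these lie in `A`. -/
def gluedDouble : SimpleGraph (Bool × V) :=
  fromRel fun x y =>
    (G.Adj x.2 y.2 ∧ (x.1 = y.1 ∨ x.2 = b ∨ y.2 = b)) ∨ (x = (true, b) ∧ y.2 ∈ A)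

namespace gluedDouble

variable [DecidableEq V]

def copy (p : Bool) (v : V) : Bool × V := (p && !decide (v = b), v)

variable {G A b}

theorem copy_ne_apex (p : Bool) (v : V) : copy b p v ≠ (true, b) := by
  intro h
  simp only [copy, Prod.mk.injEq] at h
  simp [h.2] at h

theorem adj_copy_iff {p : Bool} {u v : V} :
    (gluedDouble G A b).Adj (copy b p u) (copy b p v) ↔ G.Adj u v := by
  simp only [gluedDouble, fromRel_adj]
  constructor
  · rintro ⟨-, (⟨h, -⟩ | ⟨h, -⟩) | (⟨h, -⟩ | ⟨h, -⟩)⟩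
    · exact h
    · exact absurd h (copy_ne_apex p u)
    · exact h.symm
    · exact absurd h (copy_ne_apex p v)
  · intro h
    refine ⟨fun he => h.ne (congrArg Prod.snd he), .inl (.inl ⟨h, ?_⟩)⟩
    by_cases hu : u = b
    · exact .inr (.inl hu)
    by_cases hv : v = b
    · exact .inr (.inr hv)
    · simp [copy, hu, hv]

variable (G A b) in
def copyEmb (p : Bool) : G ↪g gluedDouble G A b where
  toFun := copy b p
  inj' _ _ h := congrArg Prod.snd h
  map_rel_iff' := adj_copy_iff

@[simp]
theorem copyEmb_apply (p : Bool) (v : V) : copyEmb G A b p v = copy b p v := rfl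

theorem separates :
    Separates (gluedDouble G A b) (false, b) (Set.range (copy b false))
      (Set.range (copy b true)) := by
  rintro _ ⟨u, rfl⟩ _ ⟨v, rfl⟩ huv
  by_cases hv : v = b
  · exact .inr (by simp [copy, hv])
  simp only [gluedDouble, fromRel_adj, copy] at huv ⊢
  grind

theorem mem_range_copy_of_ne_apex {x : Bool × V} (hx : x ≠ (true, b)) :
    x ∈ Set.range (copy b false) ∪ Set.range (copy b true) := by
  obtain ⟨_ | _, v⟩ := x
  · exact .inl ⟨v, by simp [copy]⟩
  · exact .inr ⟨v, by simp_all [copy]⟩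

end gluedDouble

open gluedDouble

variable {G A b}

theorem hasCliqueMinor_of_gluedDouble {t : ℕ} (h : HasCliqueMinor (gluedDouble G A b) (t + 1)) :
    HasCliqueMinor G t := by
  classical
  obtain ⟨f, hf⟩ := hasCliqueMinor_iff.1 h
  obtain ⟨g, hg, hapex⟩ := hf.exists_avoiding (true, b)
  have hcover i : g i ⊆ Set.range (copy b false) ∪ Set.range (copy b true) :=
    fun x hx => mem_range_copy_of_ne_apex (ne_of_mem_of_not_mem hx (hapex i))
  have hglue p : ((false, b) : Bool × V) ∈ Set.range (copy b p) := ⟨b, by simp [copy]⟩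
  rcases separates.isCliqueMinorModel_inter_or hg hcover (hglue false) (hglue true) with h | h
  · exact hasCliqueMinor_iff.2 ⟨_, h.comap (copyEmb G A b false) fun _ => Set.inter_subset_right⟩
  · exact hasCliqueMinor_iff.2 ⟨_, h.comap (copyEmb G A b true) fun _ => Set.inter_subset_right⟩

theorem ncard_neighborSet_add_one_le_gluedDouble [Finite V] {a : V} (ha : a ∈ A) (hbA : b ∉ A)
    (p : Bool) : (G.neighborSet a).ncard + 1 ≤ ((gluedDouble G A b).neighborSet (p, a)).ncard := by
  classical
  have hab : a ≠ b := ne_of_mem_of_not_mem ha hbA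
  have hcopy : copyEmb G A b p a = (p, a) := by simp [copy, hab]
  rw [← hcopy]
  refine (copyEmb G A b p).ncard_neighborSet_add_one_le (z := (true, b))
    (fun ⟨v, hv⟩ => copy_ne_apex p v hv) ?_
  rw [hcopy, gluedDouble, fromRel_adj]
  exact ⟨fun h => hab (congrArg Prod.snd h), .inr (.inr ⟨rfl, ha⟩)⟩

theorem isBipartitionWith_gluedDouble {B : Set V}
    (h : IsBipartitionWith G A B) (hb : b ∈ B) :
    IsBipartitionWith (gluedDouble G A b) (Prod.snd ⁻¹' A) (Prod.snd ⁻¹' B) := by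
  obtain ⟨hcover, hdisj, hadj⟩ := h
  refine ⟨fun x => hcover x.2, fun x => hdisj x.2, fun x y hxy => ?_⟩
  rcases (fromRel_adj _ x y).1 hxy with ⟨-, (⟨h, -⟩ | ⟨rfl, hy⟩) | (⟨h, -⟩ | ⟨rfl, hx⟩)⟩
  · exact hadj h
  · exact iff_of_false (fun hbA => hdisj b ⟨hbA, hb⟩) fun hyB => hdisj y.2 ⟨hy, hyB⟩
  · exact hadj h.symm
  · exact iff_of_true hx hb

end GluedDouble

/-- If every bipartite graph with bipartition `(A,B)`, `|A| ≥ |B| > 0` and every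
vertex of `A` of degree at least six has a `K_6` minor, then every bipartite graph
with bipartition `(A,B)`, `|A| ≥ |B| > 0` and every vertex of `A` of degree at least
five has a `K_5` minor. -/
theorem k6_implies_k5 :
    (∀ (V : Type) (_ : Fintype V) (G : SimpleGraph V) (A B : Set V),
        IsBipartitionWith G A B → B.ncard ≤ A.ncard → B.Nonempty →
          (∀ a ∈ A, 6 ≤ (G.neighborSet a).ncard) → HasCliqueMinor G 6) →
    ∀ (V : Type) (_ : Fintype V) (G : SimpleGraph V) (A B : Set V),
        IsBipartitionWith G A B → B.ncard ≤ A.ncard → B.Nonempty →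
          (∀ a ∈ A, 5 ≤ (G.neighborSet a).ncard) → HasCliqueMinor G 5 := by
  intro hK6 V _ G A B hbip hcard ⟨b, hb⟩ hdeg
  have hbA : b ∉ A := fun hbA => hbip.2.1 b ⟨hbA, hb⟩
  refine hasCliqueMinor_of_gluedDouble (A := A) (b := b) <| hK6 _ inferInstance _ _ _
    (isBipartitionWith_gluedDouble hbip hb) ?_ ⟨(true, b), hb⟩ ?_
  · simp only [← Set.univ_prod, Set.ncard_prod]
    exact Nat.mul_le_mul_left _ hcard
  · rintro ⟨p, a⟩ (ha : a ∈ A)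
    exact (Nat.add_le_add_right (hdeg a ha) 1).trans
      (ncard_neighborSet_add_one_le_gluedDouble ha hbA p)
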